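/- For every point ℓ of the quaternionic projective line ℙ(ℍ²), the fiber h⁻¹(ℓ) of the quaternionic Hopf map h : S⁷ → ℙ(ℍ²) over ℓ, with its subspace topology, is homeomorphic to the 3-sphere, i.e., to the unit sphere {q ∈ ℍ : ‖q‖ = 1} of the quaternions. -/
import Mathlib


/-!
STATEMENT 2: For every point `ℓ` of the quaternionic projective line `ℙ(ℍ²)`,
the fiber `h⁻¹(ℓ)` of the quaternionic Hopf map `h : S⁷ → ℙ(ℍ²)` over `ℓ`,
with its subspace topology, is homeomorphic to the 3-sphere, i.e. to the unit
sphere `{q ∈ ℍ : ‖q‖ = 1}` of the quaternions.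
-/

open scoped LinearAlgebra.Projectivization

noncomputable section

local notation "ℍ" => Quaternion ℝ

/-- `ℍ²`: the product `ℍ × ℍ` with the L² (Euclidean) norm, a left `ℍ`-module. -/
abbrev H2 : Type := WithLp 2 (ℍ × ℍ)

/-- The quotient topology on the projectivization `ℙ ℍ ℍ²`. -/
instance : TopologicalSpace (ℙ ℍ H2) :=
  inferInstanceAs (TopologicalSpace (Quotient (projectivizationSetoid ℍ H2)))

/-- `S⁷`: the unit sphere of `ℍ²`, with the subspace topology. -/
abbrev S7 : Type := Metric.sphere (0 : H2) 1

/-- The quaternionic Hopf map, sending a unit vector `v ∈ S⁷ ⊆ ℍ²` to its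
equivalence class `[v] ∈ ℙ(ℍ²)`, i.e. to the quaternionic line it spans. -/
def hopf (v : S7) : ℙ ℍ H2 :=
  Projectivization.mk ℍ (v : H2) (by
    have hv : ‖(v : H2)‖ = 1 := mem_sphere_zero_iff_norm.mp v.2
    intro h
    rw [h] at hv
    simp at hv)

lemma norm_qsmul (c : ℍ) (x : H2) : ‖c • x‖ = ‖c‖ * ‖x‖ := by
  have h1 := WithLp.prod_norm_sq_eq_of_L2 (c • x)
  have h2 := WithLp.prod_norm_sq_eq_of_L2 x
  have hf : (c • x).fst = c * x.fst := rfl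
  have hs : (c • x).snd = c * x.snd := rfl
  have key : ‖c • x‖ ^ 2 = (‖c‖ * ‖x‖) ^ 2 := by
    rw [h1, hf, hs, norm_mul, norm_mul, mul_pow]
    nlinarith [h2]
  rw [← Real.sqrt_sq (norm_nonneg (c • x)), key, Real.sqrt_sq (by positivity)]

theorem hopf_fiber_homeomorph_sphere3 (ℓ : ℙ ℍ H2) :
    Nonempty ((hopf ⁻¹' {ℓ} : Set S7) ≃ₜ Metric.sphere (0 : ℍ) 1) := by
  classical
  set v : H2 := ℓ.rep with hvdef
  have hv : v ≠ 0 := ℓ.rep_nonzero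
  have hnv : ‖v‖ ≠ 0 := norm_ne_zero_iff.mpr hv
  set v₀ : H2 := (‖v‖⁻¹ : ℝ) • v with hv0def
  have hv0norm : ‖v₀‖ = 1 := by
    rw [hv0def, norm_smul, norm_inv, norm_norm, inv_mul_cancel₀ hnv]
  have hv0 : v₀ ≠ 0 := by
    intro h; rw [h, norm_zero] at hv0norm; norm_num at hv0norm
  have hmk : Projectivization.mk ℍ v₀ hv0 = ℓ := by
    conv_rhs => rw [← ℓ.mk_rep]
    rw [Projectivization.mk_eq_mk_iff']
    refine ⟨((‖v‖⁻¹ : ℝ) : ℍ), ?_⟩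
    rw [hv0def, ← algebraMap_smul ℍ (‖v‖⁻¹ : ℝ) v]
    rfl
  -- the forward map
  have hmem : ∀ c : Metric.sphere (0 : ℍ) 1, ‖(c : ℍ) • v₀‖ = 1 := by
    intro c
    rw [norm_qsmul, hv0norm, mul_one, mem_sphere_zero_iff_norm.mp c.2]
  have hfib : ∀ c : Metric.sphere (0 : ℍ) 1,
      (⟨(c : ℍ) • v₀, mem_sphere_zero_iff_norm.mpr (hmem c)⟩ : S7) ∈ (hopf ⁻¹' {ℓ} : Set S7) := by
    intro c
    have hc : (c : ℍ) ≠ 0 := by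
      intro h
      have := mem_sphere_zero_iff_norm.mp c.2
      rw [h, norm_zero] at this; norm_num at this
    simp only [Set.mem_preimage, Set.mem_singleton_iff, hopf]
    rw [← hmk, Projectivization.mk_eq_mk_iff']
    exact ⟨(c : ℍ), rfl⟩
  let f : Metric.sphere (0 : ℍ) 1 → (hopf ⁻¹' {ℓ} : Set S7) :=
    fun c => ⟨⟨(c : ℍ) • v₀, mem_sphere_zero_iff_norm.mpr (hmem c)⟩, hfib c⟩
  have hinj : Function.Injective f := by
    intro c d h
    have h1 := Subtype.ext_iff.mp h
    have h' : (c : ℍ) • v₀ = (d : ℍ) • v₀ := Subtype.ext_iff.mp h1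
    have : ((c : ℍ) - (d : ℍ)) • v₀ = 0 := by rw [sub_smul, h', sub_self]
    have hn : ‖((c : ℍ) - (d : ℍ))‖ * ‖v₀‖ = 0 := by rw [← norm_qsmul, this, norm_zero]
    rw [hv0norm, mul_one, norm_eq_zero, sub_eq_zero] at hn
    exact Subtype.ext hn
  have hsurj : Function.Surjective f := by
    rintro ⟨⟨w, hw⟩, hwf⟩
    have hwn : ‖w‖ = 1 := mem_sphere_zero_iff_norm.mp hw
    have hwne : w ≠ 0 := by intro h; rw [h, norm_zero] at hwn; norm_num at hwn
    have : Projectivization.mk ℍ w hwne = Projectivization.mk ℍ v₀ hv0 := by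
      rw [hmk]
      simpa [hopf, Set.mem_preimage, Set.mem_singleton_iff] using hwf
    obtain ⟨a, ha⟩ := (Projectivization.mk_eq_mk_iff' ℍ w v₀ hwne hv0).mp this
    have han : ‖a‖ = 1 := by
      have := congrArg norm ha
      rw [norm_qsmul, hv0norm, mul_one, hwn] at this
      exact this
    refine ⟨⟨a, mem_sphere_zero_iff_norm.mpr han⟩, ?_⟩
    apply Subtype.ext; apply Subtype.ext
    exact ha
  have hcont : Continuous f := by
    apply Continuous.subtype_mk
    apply Continuous.subtype_mk
    exact continuous_subtype_val.smul continuous_const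
  let e : Metric.sphere (0 : ℍ) 1 ≃ (hopf ⁻¹' {ℓ} : Set S7) :=
    Equiv.ofBijective f ⟨hinj, hsurj⟩
  have : Continuous e := hcont
  exact ⟨(this.homeoOfEquivCompactToT2).symm⟩
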